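/- arXiv:2209.08728 — 2 statements merged into one kernel-verified Lean document; each statement's English description precedes it below -/
import Mathlib

section
/- Let h : ℝⁿ → ℝ be C², σ, b > 0 as above, with h_b = exp(bh) and B_b = h_b⁻¹. Suppose at a point x we have L^D(h)(x) + L^I_σ(h)(x) ≥ b H_σ(h)(x), where L^D(h)(x) denotes the drift-directional derivative of h. Then L^D(B_b)(x) + L^I_σ(B_b)(x) ≤ 0. -/
open Real Matrix

noncomputable def hess {n : ℕ} (h : (Fin n → ℝ) → ℝ) (x : Fin n → ℝ) :
    Matrix (Fin n) (Fin n) ℝ :=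
  fun i j => iteratedFDeriv ℝ 2 h x ![Pi.single i 1, Pi.single j 1]

noncomputable def LI {n d : ℕ} (σ : (Fin n → ℝ) → Matrix (Fin n) (Fin d) ℝ)
    (y : (Fin n → ℝ) → ℝ) (x : Fin n → ℝ) : ℝ :=
  (1 / 2) * Matrix.trace (σ x * (σ x)ᵀ * hess y x)

noncomputable def Hsig {n d : ℕ} (σ : (Fin n → ℝ) → Matrix (Fin n) (Fin d) ℝ)
    (h : (Fin n → ℝ) → ℝ) (x : Fin n → ℝ) : ℝ :=
  (1 / 2) * ∑ k, ((σ x)ᵀ.mulVec (fun i => fderiv ℝ h x (Pi.single i 1)) k) ^ 2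

/-- Drift-directional derivative `L^D(y)(x) = ∇y(x) · F(x)`. -/
noncomputable def LD {n : ℕ} (F : (Fin n → ℝ) → (Fin n → ℝ))
    (y : (Fin n → ℝ) → ℝ) (x : Fin n → ℝ) : ℝ :=
  fderiv ℝ y x (F x)

/-- If `L^D h + L^I_σ h ≥ b H_σ(h)` at `x`, then the generator of `B_b = e^{−bh}`
is nonpositive at `x`. -/
theorem stmt_3 {n d : ℕ} (h : (Fin n → ℝ) → ℝ) (hh : ContDiff ℝ 2 h)
    (σ : (Fin n → ℝ) → Matrix (Fin n) (Fin d) ℝ)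
    (F : (Fin n → ℝ) → (Fin n → ℝ)) (b : ℝ) (hb : 0 < b)
    (x : Fin n → ℝ)
    (hineq : LD F h x + LI σ h x ≥ b * Hsig σ h x) :
    LD F (fun y => Real.exp (-b * h y)) x
      + LI σ (fun y => Real.exp (-b * h y)) x ≤ 0 := by
  set g : (Fin n → ℝ) → ℝ := fun y => Real.exp (-b * h y) with hg
  have hdh : Differentiable ℝ h := hh.differentiable (by norm_num)
  have hdfh : ContDiff ℝ 1 (fderiv ℝ h) := hh.fderiv_right (by norm_num)
  -- first derivative of g
  have hA : ∀ y, HasFDerivAt g ((-b * g y) • fderiv ℝ h y) y := by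
    intro y
    have h1 : HasFDerivAt (fun z => -b * h z) ((-b) • fderiv ℝ h y) y :=
      (hdh y).hasFDerivAt.const_mul (-b)
    have h2 := h1.exp
    simpa [hg, neg_mul, smul_smul, neg_smul, mul_comm] using h2
  have hfg : fderiv ℝ g = fun y => (-b * g y) • fderiv ℝ h y := by
    funext y; exact (hA y).fderiv
  -- second derivative of g
  have hc : HasFDerivAt (fun y => -b * g y) (((-b) * (-b * g x)) • fderiv ℝ h x) x := by
    have := (hA x).const_mul (-b)
    simpa [smul_smul] using this
  have hf2 : HasFDerivAt (fderiv ℝ h) (fderiv ℝ (fderiv ℝ h) x) x :=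
    (hdfh.differentiable (by norm_num) x).hasFDerivAt
  have hB : HasFDerivAt (fderiv ℝ g)
      ((-b * g x) • (fderiv ℝ (fderiv ℝ h) x)
        + ((((-b) * (-b * g x)) • fderiv ℝ h x).smulRight (fderiv ℝ h x))) x := by
    rw [hfg]
    exact hc.smul hf2
  set p : Fin n → ℝ := fun i => fderiv ℝ h x (Pi.single i 1) with hp
  have hessg : hess g x = (-b * g x) • hess h x + ((b * b * g x) • Matrix.vecMulVec p p) := by
    funext i j
    have e1 : hess g x i j
        = fderiv ℝ (fderiv ℝ g) x (Pi.single i 1) (Pi.single j 1) := by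
      simp [hess, iteratedFDeriv_two_apply]
    have e2 : hess h x i j
        = fderiv ℝ (fderiv ℝ h) x (Pi.single i 1) (Pi.single j 1) := by
      simp [hess, iteratedFDeriv_two_apply]
    rw [e1, hB.fderiv]
    simp only [ContinuousLinearMap.add_apply, ContinuousLinearMap.smul_apply,
      ContinuousLinearMap.smulRight_apply, Matrix.add_apply, Matrix.smul_apply,
      Matrix.vecMulVec_apply, e2, smul_eq_mul, hp]
    ring
  -- LD part
  have hLD : LD F g x = (-b * g x) * LD F h x := by
    simp [LD, hfg]
  -- LI part
  have htr : Matrix.trace (σ x * (σ x)ᵀ * Matrix.vecMulVec p p)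
      = ∑ k, ((σ x)ᵀ.mulVec p k) ^ 2 := by
    set A := σ x with hA'
    have L : Matrix.trace (A * Aᵀ * Matrix.vecMulVec p p)
        = ∑ i, ∑ j, ∑ k, A i k * A j k * (p j * p i) := by
      simp [Matrix.trace, Matrix.diag, Matrix.mul_apply, Matrix.vecMulVec_apply,
        Matrix.transpose_apply, Finset.sum_mul]
    have R : ∑ k, (Aᵀ.mulVec p k) ^ 2
        = ∑ k, ∑ i, ∑ j, A i k * A j k * (p j * p i) := by
      refine Finset.sum_congr rfl fun k _ => ?_
      rw [sq]
      simp only [Matrix.mulVec, Matrix.transpose_apply, dotProduct, Finset.sum_mul,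
        Finset.mul_sum]
      refine Finset.sum_congr rfl fun i _ => Finset.sum_congr rfl fun j _ => by ring
    rw [L, R]
    calc ∑ i, ∑ j, ∑ k, A i k * A j k * (p j * p i)
        = ∑ i, ∑ k, ∑ j, A i k * A j k * (p j * p i) :=
          Finset.sum_congr rfl fun i _ => Finset.sum_comm
      _ = ∑ k, ∑ i, ∑ j, A i k * A j k * (p j * p i) := Finset.sum_comm
  have hLI : LI σ g x = (-b * g x) * LI σ h x + (b * b * g x) * Hsig σ h x := by
    rw [LI, hessg, Matrix.mul_add, Matrix.mul_smul, Matrix.mul_smul, Matrix.trace_add,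
      Matrix.trace_smul, Matrix.trace_smul, htr]
    simp only [smul_eq_mul, Hsig, LI, ← hp]
    ring
  rw [hLD, hLI]
  have hgpos : 0 < g x := Real.exp_pos _
  nlinarith [mul_nonneg (mul_pos hb hgpos).le (sub_nonneg.mpr hineq)]
end

section
/- Let h : ℝⁿ → ℝ be C² and positive on an open set χ, let B = h⁻¹ on χ, and let F be a vector field with drift-generator L^D and diffusion-generator L^I_σ. If at x ∈ χ we have L^D(h)(x) + L^I_σ(h)(x) ≥ −γ h(x) + L^I_σ(h)(x) + h(x)² L^I_σ(B)(x) for some γ > 0, then L^D(B)(x) + L^I_σ(B)(x) ≤ γ B(x). -/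
open Real Matrix

/-- The AS-ZCBF inequality for `h` implies the AS-RCBF inequality for `B = h⁻¹`. -/
theorem stmt_4 {n d : ℕ} (χ : Set (Fin n → ℝ)) (hχ : IsOpen χ)
    (h : (Fin n → ℝ) → ℝ) (hh : ContDiffOn ℝ 2 h χ)
    (hpos : ∀ y ∈ χ, 0 < h y)
    (σ : (Fin n → ℝ) → Matrix (Fin n) (Fin d) ℝ)
    (F : (Fin n → ℝ) → (Fin n → ℝ)) (γ : ℝ) (hγ : 0 < γ)
    (x : Fin n → ℝ) (hx : x ∈ χ)
    (hineq : LD F h x + LI σ h x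
        ≥ -γ * h x + LI σ h x + (h x) ^ 2 * LI σ (fun y => (h y)⁻¹) x) :
    LD F (fun y => (h y)⁻¹) x + LI σ (fun y => (h y)⁻¹) x
      ≤ γ * (h x)⁻¹ := by
  have hx0 : 0 < h x := hpos x hx
  have hne : h x ≠ 0 := ne_of_gt hx0
  have hdiff : DifferentiableAt ℝ h x :=
    (hh.contDiffAt (hχ.mem_nhds hx)).differentiableAt (by norm_num)
  have hd : HasFDerivAt (fun y => (h y)⁻¹)
      ((ContinuousLinearMap.smulRight (1 : ℝ →L[ℝ] ℝ) (-(h x ^ 2)⁻¹)).comp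
        (fderiv ℝ h x)) x :=
    (hasFDerivAt_inv hne).comp x hdiff.hasFDerivAt
  have key : LD F (fun y => (h y)⁻¹) x = -(h x ^ 2)⁻¹ * LD F h x := by
    simp only [LD, hd.fderiv]
    simp [mul_comm]
  have hh2 : (0:ℝ) < h x ^ 2 := by positivity
  have hmain : LD F h x ≥ -γ * h x + (h x) ^ 2 * LI σ (fun y => (h y)⁻¹) x := by
    linarith
  rw [key]
  rw [ge_iff_le, ← sub_nonneg] at hmain
  have := div_nonneg hmain hh2.le
  have hexp : γ * (h x)⁻¹ - (-(h x ^ 2)⁻¹ * LD F h x + LI σ (fun y => (h y)⁻¹) x)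
      = (LD F h x - (-γ * h x + h x ^ 2 * LI σ (fun y => (h y)⁻¹) x)) / h x ^ 2 := by
    field_simp
    ring
  linarith [hexp ▸ this]
end
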